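/- Let (X,d) be a metric space, H ⊆ X a finite nonempty set, l an integer, and suppose the radius r = max_{p ∈ H} d(p, π_1) of H around a root point π_1 ∈ H satisfies r ≤ 2^l. Let π_1, π_2, …, π_m ∈ H be obtained by farthest-point greedy selection (π_{k+1} maximizes the minimum distance to {π_1,…,π_k} over H) stopped at the least m with max_{p ∈ H} min_{1 ≤ i ≤ m} d(p, π_i) ≤ 2^{l-1}. Then the children π_1,…,π_m of the tree vertex π_1 at level l satisfy the cover tree covering property, {π_1,…,π_m} ⊆ B(π_1, 2^l), and the cover tree separating property, d(π_i, π_j) ≥ 2^{l-1} for all i ≠ j. -/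

import Mathlib

section GreedySelection

variable {X : Type*} [PseudoMetricSpace X] {H : Set X} {π : ℕ → X} {c : ℝ}

theorem lt_dist_greedy_succ
    (hgreedy : ∀ k, ∀ p ∈ H,
      (⨅ i : Fin (k + 1), dist p (π i)) ≤ ⨅ i : Fin (k + 1), dist (π (k + 1)) (π i))
    {k i : ℕ} (hik : i ≤ k) (hfar : ∃ p ∈ H, c < ⨅ i : Fin (k + 1), dist p (π i)) :
    c < dist (π (k + 1)) (π i) := by
  obtain ⟨p, hpH, hp⟩ := hfar
  calc c < ⨅ i : Fin (k + 1), dist p (π i) := hp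
    _ ≤ ⨅ i : Fin (k + 1), dist (π (k + 1)) (π i) := hgreedy k p hpH
    _ ≤ dist (π (k + 1)) (π i) :=
      ciInf_le (Finite.bddBelow_range _) (⟨i, Nat.lt_succ_of_le hik⟩ : Fin (k + 1))

theorem le_dist_greedy_of_ne
    (hgreedy : ∀ k, ∀ p ∈ H,
      (⨅ i : Fin (k + 1), dist p (π i)) ≤ ⨅ i : Fin (k + 1), dist (π (k + 1)) (π i))
    {m : ℕ} (hleast : ∀ m', 1 ≤ m' → m' < m → ∃ p ∈ H, c < ⨅ i : Fin m', dist p (π i))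
    {i j : ℕ} (hi : i < m) (hj : j < m) (hij : i ≠ j) :
    c ≤ dist (π i) (π j) := by
  have of_lt : ∀ {i j : ℕ}, i < j → j < m → c ≤ dist (π i) (π j) := by
    intro i j hij hj
    obtain ⟨k, rfl⟩ : ∃ k, j = k + 1 := ⟨j - 1, by omega⟩
    rw [dist_comm]
    exact (lt_dist_greedy_succ hgreedy (by omega) (hleast (k + 1) (by omega) hj)).le
  rcases hij.lt_or_gt with h | h
  · exact of_lt h hj
  · exact dist_comm (π i) (π j) ▸ of_lt h hi

end GreedySelection

theorem vertex_split_invariants_general {X : Type*} [MetricSpace X]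
    (H : Set X)
    (l : ℤ)
    (π : ℕ → X) (hπH : ∀ k, π k ∈ H)
    (hradius : ∀ p ∈ H, dist p (π 0) ≤ (2 : ℝ) ^ l)
    (hgreedy : ∀ k, ∀ p ∈ H,
      (⨅ i : Fin (k + 1), dist p (π i)) ≤
        ⨅ i : Fin (k + 1), dist (π (k + 1)) (π i))
    (m : ℕ)
    (hleast : ∀ m', 1 ≤ m' → m' < m →
      ∃ p ∈ H, (2 : ℝ) ^ (l - 1) < ⨅ i : Fin m', dist p (π i)) :
    (∀ i < m, dist (π 0) (π i) ≤ (2 : ℝ) ^ l) ∧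
    (∀ i j, i < m → j < m → i ≠ j → (2 : ℝ) ^ (l - 1) ≤ dist (π i) (π j)) :=
  ⟨fun i _ => dist_comm (π 0) (π i) ▸ hradius (π i) (hπH i),
    fun _ _ hi hj hij => le_dist_greedy_of_ne hgreedy hleast hi hj hij⟩

/-- The vertex-splitting step maintains the cover tree invariants: if the set
`H` has radius `r ≤ 2^l` around its root `π 0`, and the children
`π 0, …, π (m-1)` are selected greedily until the farthest remaining point is
within `2^(l-1)` of a selected child (at the least such `m`), then all
children lie in `B(π 0, 2^l)` (covering property) and distinct children are
at distance at least `2^(l-1)` from each other (separating property). -/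
theorem vertex_split_invariants {X : Type*} [MetricSpace X]
    (H : Set X) (hHfin : H.Finite) (hHne : H.Nonempty)
    (l : ℤ)
    (π : ℕ → X) (hπH : ∀ k, π k ∈ H)
    (hradius : ∀ p ∈ H, dist p (π 0) ≤ (2 : ℝ) ^ l)
    (hgreedy : ∀ k, ∀ p ∈ H,
      (⨅ i : Fin (k + 1), dist p (π i)) ≤
        ⨅ i : Fin (k + 1), dist (π (k + 1)) (π i))
    (m : ℕ) (hm : 1 ≤ m)
    (hstop : ∀ p ∈ H, (⨅ i : Fin m, dist p (π i)) ≤ (2 : ℝ) ^ (l - 1))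
    (hleast : ∀ m', 1 ≤ m' → m' < m →
      ∃ p ∈ H, (2 : ℝ) ^ (l - 1) < ⨅ i : Fin m', dist p (π i)) :
    (∀ i < m, dist (π 0) (π i) ≤ (2 : ℝ) ^ l) ∧
    (∀ i j, i < m → j < m → i ≠ j → (2 : ℝ) ^ (l - 1) ≤ dist (π i) (π j)) :=
  vertex_split_invariants_general H l π hπH hradius hgreedy m hleast
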